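/- Let Ω ⊆ ℝ^{n+1} be a nonempty proper open convex cone with open dual cone Ω*, and let F be a canonical potential of Ω. Then the map x ↦ −∇F(x) sends Ω into Ω* and is a bijection from Ω onto Ω*; moreover its derivative −D²F(x) is invertible at every x ∈ Ω, so it is a diffeomorphism from Ω onto Ω*. -/

import Mathlib

open scoped RealInnerProductSpace
open Topology

noncomputable section

abbrev Euc (m : ℕ) : Type := EuclideanSpace ℝ (Fin m)

/-- The Hessian matrix of `F` at `x` in the standard coordinates. -/
def hessMatrix {m : ℕ} (F : Euc m → ℝ) (x : Euc m) : Matrix (Fin m) (Fin m) ℝ :=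
  fun i j => iteratedFDeriv ℝ 2 F x ![EuclideanSpace.single i 1, EuclideanSpace.single j 1]

/-- A nonempty proper open convex cone in `ℝ^m`. -/
def IsOpenProperConvexCone {m : ℕ} (Ω : Set (Euc m)) : Prop :=
  Ω.Nonempty ∧ IsOpen Ω ∧ Convex ℝ Ω ∧
    (∀ x ∈ Ω, ∀ t : ℝ, Real.exp t • x ∈ Ω) ∧
    ¬ ∃ p v : Euc m, v ≠ 0 ∧ ∀ t : ℝ, p + t • v ∈ closure Ω

/-- `F` tends to `+∞` along every sequence in `Ω` converging to a boundary point of `Ω`. -/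
def BlowsUpOnBoundary {m : ℕ} (Ω : Set (Euc m)) (F : Euc m → ℝ) : Prop :=
  ∀ z ∈ frontier Ω, ∀ x : ℕ → Euc m, (∀ k, x k ∈ Ω) →
    Filter.Tendsto x Filter.atTop (nhds z) →
    Filter.Tendsto (fun k => F (x k)) Filter.atTop Filter.atTop

/-- The canonical potential of a proper open convex cone `Ω ⊆ ℝ^{n+1}`. -/
def IsCanonicalPotential (n : ℕ) (Ω : Set (Euc (n+1))) (F : Euc (n+1) → ℝ) : Prop :=
  ContDiffOn ℝ (⊤ : ℕ∞) F Ω ∧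
  (∀ x ∈ Ω, (hessMatrix F x).PosDef) ∧
  (∀ x ∈ Ω, (hessMatrix F x).det = Real.exp (2 * F x)) ∧
  (∀ x ∈ Ω, ∀ t : ℝ, F (Real.exp t • x) = F x - (n + 1) * t) ∧
  BlowsUpOnBoundary Ω F

/-- The open dual cone of `Ω`. -/
def openDualCone {m : ℕ} (Ω : Set (Euc m)) : Set (Euc m) :=
  {y | ∀ x ∈ closure Ω, x ≠ 0 → 0 < ⟪x, y⟫}

/-! ### Auxiliary lemmas -/

section Plumbing

variable {m : ℕ} {F : Euc m → ℝ} {x c v : Euc m} {s : ℝ}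

lemma hessMatrix_eq (F : Euc m → ℝ) (x : Euc m) (i j : Fin m) :
    hessMatrix F x i j
      = fderiv ℝ (fderiv ℝ F) x (EuclideanSpace.single i 1) (EuclideanSpace.single j 1) := by
  rw [hessMatrix, iteratedFDeriv_two_apply]
  simp

lemma euc_sum_single (v : Euc m) : v = ∑ i, v i • EuclideanSpace.single i (1:ℝ) := by
  conv_lhs => rw [← (EuclideanSpace.basisFun (Fin m) ℝ).sum_repr v]
  simp [EuclideanSpace.basisFun_apply, EuclideanSpace.basisFun_repr]

lemma bilin_expand (B : Euc m →L[ℝ] Euc m →L[ℝ] ℝ) (v w : Euc m) :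
    B v w = ∑ i, ∑ j, v i * w j * B (EuclideanSpace.single i 1) (EuclideanSpace.single j 1) := by
  conv_lhs => rw [euc_sum_single v, euc_sum_single w]
  simp only [map_sum, ContinuousLinearMap.sum_apply, map_smul, ContinuousLinearMap.smul_apply,
    smul_eq_mul, Finset.mul_sum]
  rw [Finset.sum_comm]
  refine Finset.sum_congr rfl fun i _ => Finset.sum_congr rfl fun j _ => by ring

lemma quad_pos {F : Euc m → ℝ} {x : Euc m} (hpd : (hessMatrix F x).PosDef)
    (v : Euc m) (hv : v ≠ 0) : 0 < fderiv ℝ (fderiv ℝ F) x v v := by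
  have hv' : (fun i => v i : Fin m → ℝ) ≠ 0 := by
    intro h; apply hv; ext i; exact congrFun h i
  have hp : (0:ℝ) < dotProduct (star (fun i => v i)) (Matrix.mulVec (hessMatrix F x) fun i => v i) :=
    hpd.dotProduct_mulVec_pos (x := fun i => v i) hv'
  rw [bilin_expand]
  simp only [← hessMatrix_eq]
  convert hp using 1
  simp [dotProduct, Matrix.mulVec, Finset.mul_sum]
  refine Finset.sum_congr rfl fun i _ => Finset.sum_congr rfl fun j _ => by ring

lemma grad_inner_eq (v : Euc m) : ⟪gradient F x, v⟫ = fderiv ℝ F x v := by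
  rw [gradient]; exact InnerProductSpace.toDual_symm_apply

lemma line_hasDerivAt (hsm : ContDiffAt ℝ (⊤ : ℕ∞) F (c + s • v)) :
    HasDerivAt (fun s : ℝ => F (c + s • v)) (fderiv ℝ F (c + s • v) v) s := by
  have h1 : HasDerivAt (fun s : ℝ => c + s • v) v s := by
    simpa using ((hasDerivAt_id s).smul_const v).const_add c
  exact (hsm.differentiableAt (by simp)).hasFDerivAt.comp_hasDerivAt s h1

lemma line_grad_hasDerivAt (hsm : ContDiffAt ℝ (⊤ : ℕ∞) F (c + s • v)) :
    HasDerivAt (fun s : ℝ => fderiv ℝ F (c + s • v) v)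
      (fderiv ℝ (fderiv ℝ F) (c + s • v) v v) s := by
  have h1 : HasDerivAt (fun s : ℝ => c + s • v) v s := by
    simpa using ((hasDerivAt_id s).smul_const v).const_add c
  have hg : ContDiffAt ℝ (⊤ : ℕ∞) (fderiv ℝ F) (c + s • v) := hsm.fderiv_right (by simp)
  have h2 : HasDerivAt (fun s : ℝ => fderiv ℝ F (c + s • v))
      (fderiv ℝ (fderiv ℝ F) (c + s • v) v) s :=
    (hg.differentiableAt (by simp)).hasFDerivAt.comp_hasDerivAt s h1
  exact (ContinuousLinearMap.apply ℝ ℝ v).hasFDerivAt.comp_hasDerivAt s h2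

/-- `toDual.symm` as an explicit real CLM. -/
def Tmap (m : ℕ) : (Euc m →L[ℝ] ℝ) →L[ℝ] Euc m :=
  ∑ i, (ContinuousLinearMap.apply ℝ ℝ (EuclideanSpace.single i 1)).smulRight
      (EuclideanSpace.single i 1)

lemma inner_Tmap (z : Euc m →L[ℝ] ℝ) (u : Euc m) : ⟪Tmap m z, u⟫ = z u := by
  have hu : z u = ∑ i, u i * z (EuclideanSpace.single i 1) := by
    conv_lhs => rw [euc_sum_single u]
    rw [map_sum]
    exact Finset.sum_congr rfl fun i _ => by rw [map_smul]; rfl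
  rw [Tmap]
  simp only [ContinuousLinearMap.sum_apply, ContinuousLinearMap.smulRight_apply,
    ContinuousLinearMap.apply_apply, sum_inner, real_inner_smul_left]
  rw [hu]
  refine Finset.sum_congr rfl fun i _ => ?_
  rw [EuclideanSpace.inner_single_left]
  simp [mul_comm]

lemma Tmap_eq_toDualSymm (z : Euc m →L[ℝ] ℝ) :
    Tmap m z = (InnerProductSpace.toDual ℝ (Euc m)).symm z := by
  apply ext_inner_right ℝ
  intro u
  rw [inner_Tmap, InnerProductSpace.toDual_symm_apply]

lemma gradient_eq_Tmap : gradient F = fun y => Tmap m (fderiv ℝ F y) := by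
  funext y
  rw [gradient, Tmap_eq_toDualSymm]

lemma grad_contDiffAt (hsm : ContDiffAt ℝ (⊤ : ℕ∞) F x) : ContDiffAt ℝ (⊤ : ℕ∞) (gradient F) x := by
  rw [gradient_eq_Tmap]
  exact (hsm.fderiv_right (by simp)).continuousLinearMap_comp (Tmap m)

lemma grad_fderiv_apply (hsm : ContDiffAt ℝ (⊤ : ℕ∞) F x) (w : Euc m) :
    fderiv ℝ (gradient F) x w = Tmap m (fderiv ℝ (fderiv ℝ F) x w) := by
  have hg : DifferentiableAt ℝ (fderiv ℝ F) x :=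
    (hsm.fderiv_right (m := 1) (WithTop.coe_le_coe.mpr le_top)).differentiableAt one_ne_zero
  have : HasFDerivAt (gradient F) ((Tmap m).comp (fderiv ℝ (fderiv ℝ F) x)) x := by
    rw [gradient_eq_Tmap]
    exact (Tmap m).hasFDerivAt.comp x hg.hasFDerivAt
  rw [this.fderiv]
  rfl

end Plumbing

section Cone

variable {m : ℕ} {Ω : Set (Euc m)}

lemma cone_smul_mem (hcone : ∀ x ∈ Ω, ∀ t : ℝ, Real.exp t • x ∈ Ω)
    {x : Euc m} (hx : x ∈ Ω) {s : ℝ} (hs : 0 < s) : s • x ∈ Ω := by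
  have := hcone x hx (Real.log s)
  rwa [Real.exp_log hs] at this

lemma cone_add_mem (hconv : Convex ℝ Ω) (hcone : ∀ x ∈ Ω, ∀ t : ℝ, Real.exp t • x ∈ Ω)
    {x z : Euc m} (hx : x ∈ Ω) (hz : z ∈ Ω) : x + z ∈ Ω := by
  have h : (1/2 : ℝ) • x + (1/2 : ℝ) • z ∈ Ω :=
    hconv hx hz (by norm_num) (by norm_num) (by norm_num)
  have h2 := cone_smul_mem hcone h (by norm_num : (0:ℝ) < 2)
  rw [smul_add, smul_smul, smul_smul] at h2
  norm_num at h2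
  exact h2

end Cone

section Main

variable {n : ℕ} {Ω : Set (Euc (n+1))} {F : Euc (n+1) → ℝ}

lemma zero_not_mem (hΩ : IsOpenProperConvexCone Ω) : (0 : Euc (n+1)) ∉ Ω := by
  obtain ⟨hne, hopen, hconv, hcone, hline⟩ := hΩ
  intro h0
  apply hline
  refine ⟨0, EuclideanSpace.single 0 1, ?_, fun t => ?_⟩
  · intro h
    have := congrFun (congrArg (fun w : Euc (n+1) => (w : Fin (n+1) → ℝ)) h) 0
    simp [EuclideanSpace.single_apply] at this
  · apply subset_closure
    rcases eq_or_ne t 0 with rfl | ht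
    · simpa using h0
    · obtain ⟨ε, hε, hball⟩ := Metric.isOpen_iff.1 hopen 0 h0
      set w : Euc (n+1) := t • EuclideanSpace.single 0 1 with hw
      have hwne : ‖w‖ ≠ 0 := by
        simp [hw, norm_smul, ht]
      have hwpos : 0 < ‖w‖ := lt_of_le_of_ne (norm_nonneg _) (Ne.symm hwne)
      set δ : ℝ := ε / (2 * ‖w‖) with hδ
      have hδpos : 0 < δ := by positivity
      have hmem : δ • w ∈ Ω := by
        apply hball
        rw [Metric.mem_ball, dist_zero_right, norm_smul]
        rw [hδ, Real.norm_eq_abs, abs_of_pos (by positivity)]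
        rw [div_mul_eq_mul_div, mul_comm]
        rw [mul_div_assoc]
        calc ‖w‖ * (ε / (2 * ‖w‖)) = ε / 2 := by field_simp
          _ < ε := by linarith
      have := cone_smul_mem hcone hmem (show (0:ℝ) < δ⁻¹ by positivity)
      rw [smul_smul, inv_mul_cancel₀ (ne_of_gt hδpos), one_smul] at this
      simpa using this

lemma homog_smul (hhom : ∀ x ∈ Ω, ∀ t : ℝ, F (Real.exp t • x) = F x - (n + 1) * t)
    {x : Euc (n+1)} (hx : x ∈ Ω) {s : ℝ} (hs : 0 < s) :
    F (s • x) = F x - (n + 1) * Real.log s := by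
  have := hhom x hx (Real.log s)
  rwa [Real.exp_log hs] at this

/-- Key negativity: the derivative of `F` in any cone direction is negative. -/
lemma fderiv_neg_on_cone (hΩ : IsOpenProperConvexCone Ω)
    (hsm : ContDiffOn ℝ (⊤ : ℕ∞) F Ω)
    (hpd : ∀ x ∈ Ω, (hessMatrix F x).PosDef)
    (hhom : ∀ x ∈ Ω, ∀ t : ℝ, F (Real.exp t • x) = F x - (n + 1) * t)
    {x z : Euc (n+1)} (hx : x ∈ Ω) (hz : z ∈ Ω) :
    fderiv ℝ F x z < 0 := by
  obtain ⟨hne, hopen, hconv, hcone, hline⟩ := id hΩ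
  have h0 : (0 : Euc (n+1)) ∉ Ω := zero_not_mem hΩ
  by_contra hcon
  push_neg at hcon
  set φd : ℝ → ℝ := fun s => fderiv ℝ F (x + s • z) z with hφd
  have hmem : ∀ s : ℝ, 0 ≤ s → x + s • z ∈ Ω := by
    intro s hs
    rcases eq_or_lt_of_le hs with h | h
    · simpa [← h] using hx
    · exact cone_add_mem hconv hcone hx (cone_smul_mem hcone hz h)
  have hsmAt : ∀ s : ℝ, 0 ≤ s → ContDiffAt ℝ (⊤ : ℕ∞) F (x + s • z) := fun s hs =>
    hsm.contDiffAt (hopen.mem_nhds (hmem s hs))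
  have hd1 : ∀ s : ℝ, 0 ≤ s → HasDerivAt (fun s : ℝ => F (x + s • z)) (φd s) s :=
    fun s hs => line_hasDerivAt (hsmAt s hs)
  have hd2 : ∀ s : ℝ, 0 ≤ s →
      HasDerivAt φd (fderiv ℝ (fderiv ℝ F) (x + s • z) z z) s :=
    fun s hs => line_grad_hasDerivAt (hsmAt s hs)
  have hz0 : z ≠ 0 := fun h => h0 (h ▸ hz)
  have hmono : StrictMonoOn φd (Set.Ici (0:ℝ)) := by
    apply strictMonoOn_of_deriv_pos (convex_Ici 0)
    · exact fun s hs => (hd2 s hs).continuousAt.continuousWithinAt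
    · intro s hs
      rw [interior_Ici] at hs
      rw [(hd2 s hs.le).deriv]
      exact quad_pos (hpd _ (hmem s hs.le)) z hz0
  have hφd0 : φd 0 = fderiv ℝ F x z := by simp [hφd]
  have hφd_nonneg : ∀ s : ℝ, s ∈ Set.Ici (0:ℝ) → 0 ≤ φd s := by
    intro s hs
    rcases eq_or_lt_of_le (Set.mem_Ici.mp hs) with h | h
    · rw [← h, hφd0]; exact hcon
    · have := hmono Set.self_mem_Ici hs h
      rw [hφd0] at this
      linarith
  have hφmono : MonotoneOn (fun s : ℝ => F (x + s • z)) (Set.Ici (0:ℝ)) := by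
    apply monotoneOn_of_deriv_nonneg (convex_Ici 0)
    · exact fun s hs => (hd1 s hs).continuousAt.continuousWithinAt
    · intro s hs
      rw [interior_Ici] at hs
      exact (hd1 s hs.le).differentiableAt.differentiableWithinAt
    · intro s hs
      rw [interior_Ici] at hs
      rw [(hd1 s hs.le).deriv]
      exact hφd_nonneg s (Set.mem_Ici.mpr hs.le)
  -- F (x + k • z) = F (k⁻¹ • x + z) - (n+1) log k for k ≥ 1
  have hsplit : ∀ k : ℕ, 1 ≤ k →
      F (x + (k:ℝ) • z) = F ((k:ℝ)⁻¹ • x + z) - (n+1) * Real.log k := by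
    intro k hk
    have hkpos : (0:ℝ) < k := by exact_mod_cast hk
    have hu : (k:ℝ)⁻¹ • x + z ∈ Ω :=
      cone_add_mem hconv hcone (cone_smul_mem hcone hx (by positivity)) hz
    have := homog_smul hhom hu hkpos
    rw [smul_add, smul_smul, mul_inv_cancel₀ (ne_of_gt hkpos), one_smul] at this
    exact this
  -- limits
  have htend : Filter.Tendsto (fun k : ℕ => (k:ℝ)⁻¹ • x + z) Filter.atTop (𝓝 z) := by
    have h1 : Filter.Tendsto (fun k : ℕ => (k:ℝ)⁻¹) Filter.atTop (𝓝 0) :=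
      tendsto_inv_atTop_nhds_zero_nat
    have := (h1.smul_const x).add_const z
    simpa using this
  have hcontz : ContinuousAt F z := (hsm.contDiffAt (hopen.mem_nhds hz)).continuousAt
  have hFlim : Filter.Tendsto (fun k : ℕ => F ((k:ℝ)⁻¹ • x + z)) Filter.atTop (𝓝 (F z)) :=
    hcontz.tendsto.comp htend
  have hloglim : Filter.Tendsto (fun k : ℕ => (n+1 : ℝ) * Real.log k) Filter.atTop
      Filter.atTop := by
    apply Filter.Tendsto.const_mul_atTop (by positivity : (0:ℝ) < n+1)
    exact Real.tendsto_log_atTop.comp tendsto_natCast_atTop_atTop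
  have hev1 : ∀ᶠ k : ℕ in Filter.atTop, F ((k:ℝ)⁻¹ • x + z) ≤ F z + 1 :=
    hFlim.eventually_le_const (by linarith)
  have hev2 : ∀ᶠ k : ℕ in Filter.atTop, F z + 1 - F x + 1 ≤ (n+1:ℝ) * Real.log k :=
    hloglim.eventually_ge_atTop _
  have hev3 : ∀ᶠ k : ℕ in Filter.atTop, 1 ≤ k := Filter.eventually_ge_atTop 1
  obtain ⟨k, ⟨h1, h2⟩, h3⟩ := ((hev1.and hev2).and hev3).exists
  have hFmono := hφmono Set.self_mem_Ici (Set.mem_Ici.mpr (Nat.cast_nonneg k))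
    (Nat.cast_nonneg k)
  simp only [zero_smul, add_zero] at hFmono
  rw [hsplit k h3] at hFmono
  linarith


lemma grad_injOn (hΩ : IsOpenProperConvexCone Ω) (hsm : ContDiffOn ℝ (⊤ : ℕ∞) F Ω)
    (hpd : ∀ x ∈ Ω, (hessMatrix F x).PosDef) :
    Set.InjOn (fun x => -gradient F x) Ω := by
  obtain ⟨hne, hopen, hconv, hcone, hline⟩ := id hΩ
  intro a ha b hb hab
  by_contra hne'
  have hgrad : gradient F a = gradient F b := by
    have := congrArg Neg.neg hab
    simpa using this
  set v := b - a with hv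
  have hv0 : v ≠ 0 := sub_ne_zero.mpr (Ne.symm hne')
  have hsegΩ : ∀ t : ℝ, t ∈ Set.Icc (0:ℝ) 1 → a + t • v ∈ Ω := by
    intro t ht
    have h := hconv ha hb (by linarith [ht.2] : (0:ℝ) ≤ 1 - t) ht.1 (by ring)
    have : a + t • v = (1 - t) • a + t • b := by
      rw [hv, smul_sub, sub_smul, one_smul]
      abel
    rw [this]
    exact h
  set ψd : ℝ → ℝ := fun t => fderiv ℝ F (a + t • v) v with hψd
  have hd2 : ∀ t ∈ Set.Icc (0:ℝ) 1,
      HasDerivAt ψd (fderiv ℝ (fderiv ℝ F) (a + t • v) v v) t := fun t ht =>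
    line_grad_hasDerivAt (hsm.contDiffAt (hopen.mem_nhds (hsegΩ t ht)))
  have hmono : StrictMonoOn ψd (Set.Icc (0:ℝ) 1) := by
    apply strictMonoOn_of_deriv_pos (convex_Icc 0 1)
    · exact fun t ht => (hd2 t ht).continuousAt.continuousWithinAt
    · intro t ht
      rw [interior_Icc] at ht
      rw [(hd2 t (Set.mem_Icc_of_Ioo ht)).deriv]
      exact quad_pos (hpd _ (hsegΩ t (Set.mem_Icc_of_Ioo ht))) v hv0
  have h01 : ψd 0 < ψd 1 :=
    hmono (Set.left_mem_Icc.mpr zero_le_one) (Set.right_mem_Icc.mpr zero_le_one) zero_lt_one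
  have e0 : ψd 0 = ⟪gradient F a, v⟫ := by
    have : ψd 0 = fderiv ℝ F a v := by
      show fderiv ℝ F (a + (0:ℝ) • v) v = _
      norm_num
    rw [this, ← grad_inner_eq]
  have e1 : ψd 1 = ⟪gradient F b, v⟫ := by
    have hb' : a + (1:ℝ) • v = b := by rw [hv, one_smul]; abel
    have : ψd 1 = fderiv ℝ F b v := by
      show fderiv ℝ F (a + (1:ℝ) • v) v = _
      rw [hb']
    rw [this, ← grad_inner_eq]
  rw [e0, e1, hgrad] at h01
  exact lt_irrefl _ h01

lemma neg_grad_map_nhds (hΩ : IsOpenProperConvexCone Ω) (hsm : ContDiffOn ℝ (⊤ : ℕ∞) F Ω)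
    (hpd : ∀ x ∈ Ω, (hessMatrix F x).PosDef) {x : Euc (n+1)} (hx : x ∈ Ω) :
    Filter.map (fun w => -gradient F w) (𝓝 x) = 𝓝 (-gradient F x) := by
  obtain ⟨hne, hopen, hconv, hcone, hline⟩ := id hΩ
  have hsmx : ContDiffAt ℝ (⊤ : ℕ∞) F x := hsm.contDiffAt (hopen.mem_nhds hx)
  set A := fderiv ℝ (gradient F) x with hA
  have hker : ∀ w : Euc (n+1), A w = 0 → w = 0 := by
    intro w hw
    by_contra hw0
    have hq := quad_pos (hpd x hx) w hw0
    have hAw : (0:ℝ) < ⟪A w, w⟫ := by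
      rw [hA, grad_fderiv_apply hsmx, inner_Tmap]
      exact hq
    rw [hw] at hAw
    simp at hAw
  have hAinj : Function.Injective ((-A : Euc (n+1) →L[ℝ] Euc (n+1)) :
      Euc (n+1) →ₗ[ℝ] Euc (n+1)) := by
    rw [injective_iff_map_eq_zero]
    intro w hw
    apply hker
    have hw' : -(A w) = 0 := hw
    simpa [neg_eq_zero] using hw'
  have hAbij : Function.Bijective ((-A : Euc (n+1) →L[ℝ] Euc (n+1)) :
      Euc (n+1) →ₗ[ℝ] Euc (n+1)) :=
    ⟨hAinj, (LinearMap.injective_iff_surjective).1 hAinj⟩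
  let e : Euc (n+1) ≃L[ℝ] Euc (n+1) :=
    (LinearEquiv.ofBijective _ hAbij).toContinuousLinearEquiv
  have hcoe : (e : Euc (n+1) →L[ℝ] Euc (n+1)) = -A := by
    ext w
    rfl
  have hstrict : HasStrictFDerivAt (gradient F) A x :=
    (grad_contDiffAt hsmx).hasStrictFDerivAt (by simp)
  have hstrictneg : HasStrictFDerivAt (fun w => -gradient F w) (-A) x := hstrict.neg
  have h2 : HasStrictFDerivAt (fun w => -gradient F w)
      (e : Euc (n+1) →L[ℝ] Euc (n+1)) x := by
    rw [hcoe]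
    exact hstrictneg
  exact h2.map_nhds_eq_of_equiv

lemma neg_grad_mapsTo (hΩ : IsOpenProperConvexCone Ω) (hsm : ContDiffOn ℝ (⊤ : ℕ∞) F Ω)
    (hpd : ∀ x ∈ Ω, (hessMatrix F x).PosDef)
    (hhom : ∀ x ∈ Ω, ∀ t : ℝ, F (Real.exp t • x) = F x - (n + 1) * t) :
    Set.MapsTo (fun x => -gradient F x) Ω (openDualCone Ω) := by
  obtain ⟨hne, hopen, hconv, hcone, hline⟩ := id hΩ
  intro x hx
  intro x' hx' hx'0
  have hnonneg : ∀ w ∈ Ω, ∀ u ∈ closure Ω, 0 ≤ ⟪u, -gradient F w⟫ := by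
    intro w hw
    have hsub : Ω ⊆ {u : Euc (n+1) | 0 ≤ ⟪u, -gradient F w⟫} := by
      intro u hu
      have hneg := fderiv_neg_on_cone hΩ hsm hpd hhom hw hu
      have hgi : ⟪u, -gradient F w⟫ = -(fderiv ℝ F w u) := by
        rw [real_inner_comm, inner_neg_left, grad_inner_eq]
      rw [Set.mem_setOf_eq, hgi]
      linarith
    have hclosed : IsClosed {u : Euc (n+1) | 0 ≤ ⟪u, -gradient F w⟫} :=
      isClosed_le continuous_const (continuous_id.inner continuous_const)
    intro u hu
    exact closure_minimal hsub hclosed hu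
  have hmap := neg_grad_map_nhds hΩ hsm hpd hx
  have himg : (fun w => -gradient F w) '' Ω ∈ 𝓝 (-gradient F x) := by
    rw [← hmap]
    exact Filter.image_mem_map (hopen.mem_nhds hx)
  obtain ⟨ε, hε, hball⟩ := Metric.mem_nhds_iff.1 himg
  have hx'norm : 0 < ‖x'‖ := norm_pos_iff.mpr hx'0
  set δ : ℝ := ε / (2 * ‖x'‖) with hδ
  have hδpos : 0 < δ := by positivity
  have hmem : -gradient F x - δ • x' ∈ Metric.ball (-gradient F x) ε := by
    rw [Metric.mem_ball, dist_eq_norm]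
    have : -gradient F x - δ • x' - -gradient F x = -(δ • x') := by abel
    rw [this, norm_neg, norm_smul, Real.norm_eq_abs, abs_of_pos hδpos, hδ]
    rw [div_mul_eq_mul_div, div_lt_iff₀ (by positivity)]
    nlinarith
  obtain ⟨w, hwΩ, hweq⟩ := hball hmem
  simp only at hweq
  have hw' := hnonneg w hwΩ x' hx'
  rw [hweq] at hw'
  rw [inner_sub_right, real_inner_smul_right] at hw'
  have hxx : 0 < ⟪x', x'⟫ := by
    rw [real_inner_self_eq_norm_sq]
    positivity
  show (0:ℝ) < ⟪x', -gradient F x⟫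
  nlinarith

lemma F_lowerBound (hΩ : IsOpenProperConvexCone Ω) (hsm : ContDiffOn ℝ (⊤ : ℕ∞) F Ω)
    (hblow : BlowsUpOnBoundary Ω F) :
    ∃ M : ℝ, ∀ u ∈ Ω, ‖u‖ = 1 → M ≤ F u := by
  obtain ⟨hne, hopen, hconv, hcone, hline⟩ := id hΩ
  by_contra hcon
  push_neg at hcon
  choose u hu h1 hFu using fun j : ℕ => hcon (-(j:ℝ))
  have husph : ∀ j, u j ∈ Metric.sphere (0 : Euc (n+1)) 1 := fun j => by
    rw [mem_sphere_zero_iff_norm]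
    exact h1 j
  obtain ⟨v, hvsph, φ, hφ, hconv'⟩ := (isCompact_sphere (0:Euc (n+1)) 1).tendsto_subseq husph
  have hvcl : v ∈ closure Ω :=
    mem_closure_of_tendsto hconv' (Filter.Eventually.of_forall fun j => hu (φ j))
  by_cases hvΩ : v ∈ Ω
  · have hcont : ContinuousAt F v := (hsm.contDiffAt (hopen.mem_nhds hvΩ)).continuousAt
    have hFlim : Filter.Tendsto (fun j => F (u (φ j))) Filter.atTop (𝓝 (F v)) :=
      hcont.tendsto.comp hconv'
    have hev : ∀ᶠ j : ℕ in Filter.atTop, F v - 1 ≤ F (u (φ j)) :=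
      hFlim.eventually_const_le (by linarith)
    have hev2 : ∀ᶠ j : ℕ in Filter.atTop, 2 - F v ≤ (j:ℝ) :=
      tendsto_natCast_atTop_atTop.eventually_ge_atTop _
    obtain ⟨j, hj1, hj2⟩ := (hev.and hev2).exists
    have hjφ : (j:ℝ) ≤ (φ j : ℝ) := by exact_mod_cast hφ.le_apply
    have := hFu (φ j)
    linarith
  · have hfront : v ∈ frontier Ω := ⟨hvcl, by rwa [hopen.interior_eq]⟩
    have hFblow := hblow v hfront (fun j => u (φ j)) (fun j => hu (φ j)) hconv'
    obtain ⟨j, hj⟩ := (hFblow.eventually_ge_atTop 0).exists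
    have h2 := hFu (φ j)
    have : (0:ℝ) ≤ (φ j : ℝ) := Nat.cast_nonneg _
    linarith

lemma sqrt_tendsto_atTop' : Filter.Tendsto Real.sqrt Filter.atTop Filter.atTop := by
  rw [Filter.tendsto_atTop_atTop]
  intro b
  refine ⟨(max b 0)^2, fun a ha => ?_⟩
  have h1 : Real.sqrt ((max b 0)^2) ≤ Real.sqrt a := Real.sqrt_le_sqrt ha
  rw [Real.sqrt_sq (le_max_right b 0)] at h1
  exact le_trans (le_max_left b 0) h1

lemma tendsto_linlog {c A : ℝ} (hc : 0 < c) (hA : 0 ≤ A) :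
    Filter.Tendsto (fun r : ℝ => c * r - A * Real.log r) Filter.atTop Filter.atTop := by
  have hbound : ∀ᶠ r : ℝ in Filter.atTop,
      Real.sqrt r * (c * Real.sqrt r - 2*A) ≤ c * r - A * Real.log r := by
    filter_upwards [Filter.eventually_ge_atTop (1:ℝ)] with r hr
    have hrpos : (0:ℝ) < r := by linarith
    have hsq : Real.sqrt r * Real.sqrt r = r := Real.mul_self_sqrt hrpos.le
    have hlog : Real.log r ≤ 2 * Real.sqrt r := by
      have h1 : Real.log (Real.sqrt r) ≤ Real.sqrt r - 1 :=
        Real.log_le_sub_one_of_pos (Real.sqrt_pos.mpr hrpos)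
      have h2 : Real.log (Real.sqrt r) = Real.log r / 2 := Real.log_sqrt hrpos.le
      linarith
    nlinarith [Real.sqrt_nonneg r]
  apply Filter.tendsto_atTop_mono' _ hbound
  apply Filter.Tendsto.atTop_mul_atTop₀
  · exact sqrt_tendsto_atTop'
  · apply Filter.tendsto_atTop_add_const_right
    exact sqrt_tendsto_atTop'.const_mul_atTop hc

lemma neg_grad_surjOn (hΩ : IsOpenProperConvexCone Ω) (hF : IsCanonicalPotential n Ω F) :
    openDualCone Ω ⊆ (fun x => -gradient F x) '' Ω := by
  obtain ⟨hsm, hpd, hdet, hhom, hblow⟩ := id hF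
  obtain ⟨hne, hopen, hconv, hcone, hline⟩ := id hΩ
  intro y hy
  obtain ⟨x₁, hx₁⟩ := hne
  set f : Euc (n+1) → ℝ := fun w => F w + ⟪w, y⟫ with hf
  set K : Set (Euc (n+1)) := {w ∈ Ω | f w ≤ f x₁} with hK
  have hKsub : K ⊆ Ω := fun w hw => hw.1
  have hx₁K : x₁ ∈ K := ⟨hx₁, le_rfl⟩
  have hfcont : ∀ w ∈ Ω, ContinuousAt f w := by
    intro w hw
    exact ((hsm.contDiffAt (hopen.mem_nhds hw)).continuousAt.add
      ((continuous_id.inner continuous_const).continuousAt))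
  have hKclosed : IsClosed K := by
    apply IsSeqClosed.isClosed
    intro u z hu huz
    have hzcl : z ∈ closure Ω :=
      mem_closure_of_tendsto huz (Filter.Eventually.of_forall fun j => (hu j).1)
    by_cases hzΩ : z ∈ Ω
    · refine ⟨hzΩ, ?_⟩
      have hft : Filter.Tendsto (fun j => f (u j)) Filter.atTop (𝓝 (f z)) :=
        ((hfcont z hzΩ).tendsto).comp huz
      exact le_of_tendsto hft (Filter.Eventually.of_forall fun j => (hu j).2)
    · exfalso
      have hfront : z ∈ frontier Ω := ⟨hzcl, by rwa [hopen.interior_eq]⟩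
      have hFblow := hblow z hfront u (fun j => (hu j).1) huz
      have hinner : Filter.Tendsto (fun j => ⟪u j, y⟫) Filter.atTop (𝓝 ⟪z, y⟫) :=
        ((continuous_id.inner continuous_const).continuousAt.tendsto).comp huz
      have hev1 : ∀ᶠ j in Filter.atTop, ⟪z, y⟫ - 1 ≤ ⟪u j, y⟫ :=
        hinner.eventually_const_le (by linarith)
      have hev2 : ∀ᶠ j in Filter.atTop, f x₁ - ⟪z, y⟫ + 2 ≤ F (u j) :=
        hFblow.eventually_ge_atTop _
      obtain ⟨j, hj1, hj2⟩ := (hev1.and hev2).exists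
      have hle := (hu j).2
      have hfu : f (u j) = F (u j) + ⟪u j, y⟫ := rfl
      have hfx1 : f x₁ = F x₁ + ⟪x₁, y⟫ := rfl
      rw [hfu, hfx1] at hle
      rw [hfx1] at hj2
      linarith
  have hKbdd : Bornology.IsBounded K := by
    by_contra hcon
    rw [isBounded_iff_forall_norm_le] at hcon
    push_neg at hcon
    choose xk hxkK hxknorm using fun k : ℕ => hcon (k:ℝ)
    obtain ⟨M, hM⟩ := F_lowerBound hΩ hsm hblow
    set r : ℕ → ℝ := fun k => ‖xk k‖ with hr
    have hrpos : ∀ k, 0 < r k := fun k => lt_of_le_of_lt (Nat.cast_nonneg k) (hxknorm k)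
    set u : ℕ → Euc (n+1) := fun k => (r k)⁻¹ • xk k with hu
    have huΩ : ∀ k, u k ∈ Ω := fun k =>
      cone_smul_mem hcone (hxkK k).1 (inv_pos.mpr (hrpos k))
    have hunorm : ∀ k, ‖u k‖ = 1 := by
      intro k
      show ‖(r k)⁻¹ • xk k‖ = 1
      rw [norm_smul, Real.norm_eq_abs, abs_of_pos (inv_pos.mpr (hrpos k))]
      exact inv_mul_cancel₀ (ne_of_gt (hrpos k))
    have hTne : (u 0) ∈ closure Ω ∩ Metric.sphere (0:Euc (n+1)) 1 :=
      ⟨subset_closure (huΩ 0), by rw [mem_sphere_zero_iff_norm]; exact hunorm 0⟩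
    have hTcomp : IsCompact (closure Ω ∩ Metric.sphere (0:Euc (n+1)) 1) :=
      (isCompact_sphere (0:Euc (n+1)) 1).inter_left isClosed_closure
    obtain ⟨umin, huminT, hmin⟩ := hTcomp.exists_isMinOn ⟨u 0, hTne⟩
      ((continuous_id.inner (continuous_const : Continuous fun _ => y)).continuousOn :
        ContinuousOn (fun w : Euc (n+1) => ⟪w, y⟫) _)
    set c : ℝ := ⟪umin, y⟫ with hc'
    have humin0 : umin ≠ 0 := by
      intro h
      have := huminT.2
      rw [h, mem_sphere_zero_iff_norm] at this
      simp at this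
    have hc : 0 < c := hy umin huminT.1 humin0
    have hclb : ∀ k, c ≤ ⟪u k, y⟫ := fun k =>
      hmin ⟨subset_closure (huΩ k), by rw [mem_sphere_zero_iff_norm]; exact hunorm k⟩
    have hfx : ∀ k, M + (c * r k - (n+1) * Real.log (r k)) ≤ f (xk k) := by
      intro k
      have hxker : xk k = (r k) • u k := by
        rw [hu, smul_smul, mul_inv_cancel₀ (ne_of_gt (hrpos k)), one_smul]
      have hFx : F (xk k) = F (u k) - (n+1) * Real.log (r k) := by
        conv_lhs => rw [hxker]
        exact homog_smul hhom (huΩ k) (hrpos k)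
      have hin : ⟪xk k, y⟫ = r k * ⟪u k, y⟫ := by
        conv_lhs => rw [hxker]
        exact real_inner_smul_left _ _ _
      have h1 : M ≤ F (u k) := hM (u k) (huΩ k) (hunorm k)
      have h2 : c * r k ≤ r k * ⟪u k, y⟫ := by
        rw [mul_comm]
        exact mul_le_mul_of_nonneg_left (hclb k) (hrpos k).le
      rw [hf]
      simp only
      rw [hFx, hin]
      linarith
    have hrt : Filter.Tendsto r Filter.atTop Filter.atTop :=
      Filter.tendsto_atTop_mono (fun k => (hxknorm k).le) tendsto_natCast_atTop_atTop
    have hgt := (tendsto_linlog hc (by positivity : (0:ℝ) ≤ n+1)).comp hrt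
    have hgt2 : Filter.Tendsto (fun k => M + (c * r k - (n+1) * Real.log (r k)))
        Filter.atTop Filter.atTop := by
      apply Filter.tendsto_atTop_add_const_left
      exact hgt
    obtain ⟨k, hk⟩ := (hgt2.eventually_ge_atTop (f x₁ + 1)).exists
    have hK2 := (hxkK k).2
    linarith [hfx k]
  have hKcomp : IsCompact K := Metric.isCompact_of_isClosed_isBounded hKclosed hKbdd
  obtain ⟨x₀, hx₀K, hminOn⟩ := hKcomp.exists_isMinOn ⟨x₁, hx₁K⟩
    (fun w hw => (hfcont w (hKsub hw)).continuousWithinAt)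
  have hx₀Ω : x₀ ∈ Ω := hx₀K.1
  have hglob : ∀ w ∈ Ω, f x₀ ≤ f w := by
    intro w hw
    by_cases hwK : f w ≤ f x₁
    · exact hminOn ⟨hw, hwK⟩
    · push_neg at hwK
      have h' : f x₀ ≤ f x₁ := hminOn hx₁K
      linarith
  have hlocmin : IsLocalMin f x₀ :=
    Filter.eventually_of_mem (hopen.mem_nhds hx₀Ω) hglob
  have hsmx : ContDiffAt ℝ (⊤ : ℕ∞) F x₀ := hsm.contDiffAt (hopen.mem_nhds hx₀Ω)
  have hinnerder : HasFDerivAt (fun w : Euc (n+1) => ⟪w, y⟫)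
      (innerSL ℝ y) x₀ := by
    have heq : (fun w : Euc (n+1) => ⟪w, y⟫) = fun w => innerSL ℝ y w := by
      funext w
      exact real_inner_comm _ _
    rw [heq]
    exact (innerSL ℝ y).hasFDerivAt
  have hder : HasFDerivAt f (fderiv ℝ F x₀ + innerSL ℝ y) x₀ :=
    ((hsmx.differentiableAt (by simp)).hasFDerivAt).add hinnerder
  have hzero : fderiv ℝ F x₀ + innerSL ℝ y = 0 := hlocmin.hasFDerivAt_eq_zero hder
  have hfd : fderiv ℝ F x₀ = -(innerSL ℝ y) := by
    rw [add_eq_zero_iff_eq_neg] at hzero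
    exact hzero
  refine ⟨x₀, hx₀Ω, ?_⟩
  show -gradient F x₀ = y
  have hTy : Tmap (n+1) (innerSL ℝ y) = y := by
    apply ext_inner_right ℝ
    intro u
    rw [inner_Tmap]
    rfl
  have : gradient F x₀ = -y := by
    have hg0 : gradient F x₀ = Tmap (n+1) (fderiv ℝ F x₀) := congrFun gradient_eq_Tmap x₀
    rw [hg0, hfd, map_neg, hTy]
  rw [this, neg_neg]

end Main

/-- Minus the gradient of the canonical potential is a bijection from `Ω` onto the open
dual cone `Ω*`, with invertible derivative `-D²F(x)` at every point. -/
theorem neg_gradient_canonical_potential_bijOn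
    (n : ℕ) (Ω : Set (Euc (n + 1))) (hΩ : IsOpenProperConvexCone Ω)
    (F : Euc (n + 1) → ℝ) (hF : IsCanonicalPotential n Ω F) :
    Set.BijOn (fun x => -gradient F x) Ω (openDualCone Ω) ∧
    ∀ x ∈ Ω, (-(hessMatrix F x)).det ≠ 0 := by
  obtain ⟨hsm, hpd, hdet, hhom, hblow⟩ := id hF
  constructor
  · exact ⟨neg_grad_mapsTo hΩ hsm hpd hhom, grad_injOn hΩ hsm hpd,
      neg_grad_surjOn hΩ hF⟩
  · intro x hx
    rw [Matrix.det_neg]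
    apply mul_ne_zero
    · apply pow_ne_zero
      norm_num
    · rw [hdet x hx]
      exact (Real.exp_pos _).ne'
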